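/- Let I be a strongly stable ideal in k[x_1,...,x_n] with last generator M_ω = x^ω, max M_ω = μ ≥ 2, ω_μ > 0, and assume x_{μ-1}^t ∈ I for some t > 0. Then |𝓘_{μ-1}| ≤ Σ_{α ∈ 𝓘_{μ-2}} f_{μ-1}(α), with equality if and only if M_ω = x_μ^{ω_μ} (i.e. ω = (0,...,0,ω_μ)). In particular 𝓘_{μ-1} is finite. -/

import Mathlib

open scoped Classical

/-- Degree of an exponent vector (monomial). -/
def mdeg {n : ℕ} (m : Fin n → ℕ) : ℕ := ∑ i, m i

/-- Degree reverse lexicographic order: `M > N`. -/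
def RevLexGT {n : ℕ} (M N : Fin n → ℕ) : Prop :=
  mdeg N < mdeg M ∨
    (mdeg M = mdeg N ∧ ∃ s : Fin n, (∀ i : Fin n, s < i → M i = N i) ∧ M s < N s)

/-- A monomial ideal, identified with its set of monomials (exponent vectors),
is upward closed under divisibility. -/
def MonIdeal {n : ℕ} (I : Set (Fin n → ℕ)) : Prop :=
  ∀ m ∈ I, ∀ m' : Fin n → ℕ, (∀ i, m i ≤ m' i) → m' ∈ I

/-- `m` is a minimal generator of the monomial ideal `I`. -/
def MinGen {n : ℕ} (I : Set (Fin n → ℕ)) (m : Fin n → ℕ) : Prop :=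
  m ∈ I ∧ ∀ m' ∈ I, (∀ i, m' i ≤ m i) → m' = m

/-- Almost reverse lexicographic ideal. -/
def ARL {n : ℕ} (I : Set (Fin n → ℕ)) : Prop :=
  ∀ M N : Fin n → ℕ, MinGen I N → mdeg M = mdeg N → RevLexGT M N → M ∈ I

/-- Strongly stable monomial ideal. -/
def StronglyStable {n : ℕ} (I : Set (Fin n → ℕ)) : Prop :=
  MonIdeal I ∧ ∀ M ∈ I, ∀ i j : Fin n, j < i → 0 < M i →
    (fun k => if k = i then M i - 1 else if k = j then M j + 1 else M k) ∈ I

/-- The last generator `M_ω` of a monomial ideal: a minimal generator of maximal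
degree which is smallest in the degree reverse lexicographic order among the
minimal generators of that degree. -/
def IsLastGen {n : ℕ} (I : Set (Fin n → ℕ)) (W : Fin n → ℕ) : Prop :=
  MinGen I W ∧ (∀ N, MinGen I N → mdeg N ≤ mdeg W) ∧
    (∀ N, MinGen I N → mdeg N = mdeg W → N = W ∨ RevLexGT N W)

/-- `max M`: the largest (1-based) index of a variable dividing `M` (0 for `M = 1`). -/
def maxVar {n : ℕ} (m : Fin n → ℕ) : ℕ :=
  Finset.univ.sup (fun i : Fin n => if 0 < m i then i.1 + 1 else 0)

/-- Hilbert function of `R/I`: the number of monomials of degree `d` not in `I`. -/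
noncomputable def hilb {n : ℕ} (I : Set (Fin n → ℕ)) (d : ℕ) : ℕ :=
  Set.ncard {m : Fin n → ℕ | mdeg m = d ∧ m ∉ I}

/-- Truncation of an exponent vector to its first `i` coordinates. -/
def truncW {n : ℕ} (W : Fin n → ℕ) (i : ℕ) : Fin n → ℕ :=
  fun j => if j.1 < i then W j else 0

/-- The set `𝓘_i` (for `i ≤ μ-2`): exponent vectors supported on the first `i`
coordinates, coordinatewise below the `f_j`'s, i.e. not lying in `I`. -/
def Iset {n : ℕ} (I : Set (Fin n → ℕ)) (i : ℕ) : Set (Fin n → ℕ) :=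
  {α | (∀ k : Fin n, i ≤ k.1 → α k = 0) ∧ α ∉ I}

/-- The set `𝓘_{μ-1}`, which additionally requires `α ≥ (ω_1,…,ω_{μ-1})`. -/
def IsetLast {n : ℕ} (I : Set (Fin n → ℕ)) (W : Fin n → ℕ) (μ : ℕ) :
    Set (Fin n → ℕ) :=
  {α | α ∈ Iset I (μ - 1) ∧ (α = truncW W (μ - 1) ∨ RevLexGT α (truncW W (μ - 1)))}

/-- `f_{i+1}(α) = min {t : x^α x_{i+1}^t ∈ I}` (ℕ-valued, junk `0` if no such `t`). -/
noncomputable def fmin {n : ℕ} (I : Set (Fin n → ℕ)) (α : Fin n → ℕ) (i : Fin n) : ℕ :=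
  sInf {t | α + Pi.single i t ∈ I}

/-- `f_{i+1}(α)` valued in `ℕ∞` (equal to `⊤` when no power works). -/
noncomputable def fminTop {n : ℕ} (I : Set (Fin n → ℕ)) (α : Fin n → ℕ) (i : Fin n) : ℕ∞ :=
  sInf ((fun t : ℕ => (t : ℕ∞)) '' {t | α + Pi.single i t ∈ I})

/-- Iterated truncated difference sequence `h^{(i)}`. -/
def hseq (h : ℕ → ℕ) : ℕ → ℕ → ℕ
  | 0, d => h d
  | _ + 1, 0 => 1
  | i + 1, e + 1 => hseq h i (e + 1) - hseq h i e

/-- The set whose infimum is `r_i(h)`. -/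
def rset (h : ℕ → ℕ) (i : ℕ) : Set ℕ :=
  {d | 1 ≤ d ∧ hseq h i d ≤ hseq h i (d - 1)}

/-- `D(h) = min {i : r_i < ∞}`. -/
noncomputable def Dval (h : ℕ → ℕ) : ℕ := sInf {i | (rset h i).Nonempty}

/-- `h` is unimodal at each tail. -/
def UnimodalAtTails (h : ℕ → ℕ) : Prop :=
  ∀ i, Dval h ≤ i → i < max 1 (h 1) →
    ∀ d, (∃ r ∈ rset h i, r ≤ d) → hseq h i d ≤ hseq h i (d - 1)

/-- The polynomial `Π (1 - z^{d_i})`. -/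
noncomputable def froPoly (ds : List ℕ) : Polynomial ℤ :=
  (ds.map (fun d => 1 - Polynomial.X ^ d)).prod

/-- Coefficient of `z^i` in the power series `Π (1 - z^{d_i}) / (1-z)^n`. -/
noncomputable def froCoeff (n : ℕ) (ds : List ℕ) (i : ℕ) : ℤ :=
  ∑ j ∈ Finset.range (i + 1),
    (froPoly ds).coeff j * (Nat.choose (n - 1 + (i - j)) (i - j) : ℤ)

/-- The Fröberg sequence `|n; d_1,…,d_m|`: the truncation `| · |` of the power
series `Π (1 - z^{d_i}) / (1-z)^n`. -/
noncomputable def fro (n : ℕ) (ds : List ℕ) (i : ℕ) : ℕ :=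
  if ∀ j ≤ i, 0 < froCoeff n ds j then (froCoeff n ds i).toNat else 0

/-!
Since `x_{μ-1}^t ∈ I` and `I` is strongly stable, `x_j^t ∈ I` for every `j ≤ μ-1`, so the
monomials in `x_1, …, x_{μ-1}` outside `I` lie in a box and are finitely many. Each of them is
uniquely `x^α x_{μ-1}^b` with `α ∈ 𝓘_{μ-2}` and `b < f_{μ-1}(α)`, so their number is
`Σ_{α ∈ 𝓘_{μ-2}} f_{μ-1}(α)`, and `𝓘_{μ-1}` is the subset of those that are `≥ x^{ω'}`,
`ω' = (ω_1, …, ω_{μ-1})`. If `ω' = 0` the extra condition is empty. Otherwise `x^{ω'}` properly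
divides the minimal generator `x^ω` (as `ω_μ > 0`), so `x^{ω'} ∉ I`, and dividing it by one of
its variables gives a monomial outside `I` of smaller degree, hence not in `𝓘_{μ-1}`.
-/

open Function

section

variable {n : ℕ}

lemma update_zero_add_single {ι M : Type*} [DecidableEq ι] [AddZeroClass M] (f : ι → M)
    (i : ι) : update f i 0 + Pi.single i (f i) = f := by
  funext k
  rcases eq_or_ne k i with rfl | hki
  · simp
  · simp [hki]

lemma mdeg_add (a b : Fin n → ℕ) : mdeg (a + b) = mdeg a + mdeg b :=
  Finset.sum_add_distrib

lemma mdeg_single (i : Fin n) (t : ℕ) : mdeg (Pi.single i t) = t := by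
  simp [mdeg]

lemma mdeg_pos_of_ne_zero {M : Fin n → ℕ} (hM : M ≠ 0) : 0 < mdeg M :=
  Nat.pos_of_ne_zero fun h0 =>
    hM (funext fun i => Finset.sum_eq_zero_iff.mp h0 i (Finset.mem_univ i))

lemma revLexGT_zero_of_ne_zero {M : Fin n → ℕ} (hM : M ≠ 0) : RevLexGT M 0 :=
  Or.inl (by simpa [mdeg] using mdeg_pos_of_ne_zero hM)

lemma not_revLexGT_of_mdeg_lt {M N : Fin n → ℕ} (h : mdeg M < mdeg N) : ¬RevLexGT M N := by
  rintro (h' | ⟨h', -⟩) <;> omega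

lemma exists_pos_of_maxVar_eq {W : Fin n → ℕ} {μ : ℕ} (hmax : maxVar W = μ) (hμ : 0 < μ) :
    ∃ i : Fin n, i.1 + 1 = μ ∧ 0 < W i := by
  have hlt : μ - 1 < maxVar W := by omega
  obtain ⟨i, -, hi⟩ := Finset.lt_sup_iff.mp hlt
  have hle : (if 0 < W i then i.1 + 1 else 0) ≤ maxVar W :=
    Finset.le_sup (f := fun i : Fin n => if 0 < W i then i.1 + 1 else 0) (Finset.mem_univ i)
  split_ifs at hi hle with hWi
  · exact ⟨i, by omega, hWi⟩
  · omega

variable {I : Set (Fin n → ℕ)}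

lemma Iset_mono {m m' : ℕ} (h : m ≤ m') : Iset I m ⊆ Iset I m' :=
  fun _ hα => ⟨fun k hk => hα.1 k (h.trans hk), hα.2⟩

lemma StronglyStable.single_mem_of_lt (hI : StronglyStable I) {i j : Fin n} (hji : j < i)
    {t : ℕ} (h : Pi.single i t ∈ I) : Pi.single j t ∈ I := by
  have key : ∀ s ≤ t, Pi.single i (t - s) + Pi.single j s ∈ I := by
    intro s
    induction s with
    | zero => intro _; simpa using h
    | succ s ih =>
      intro hs
      have hmove := hI.2 _ (ih (by omega)) i j hji (by
        simp only [Pi.add_apply, Pi.single_eq_same, Pi.single_eq_of_ne hji.ne', add_zero]; omega)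
      convert hmove using 1
      funext k
      rcases eq_or_ne k i with rfl | hki
      · simp only [Pi.add_apply, Pi.single_eq_same, Pi.single_eq_of_ne hji.ne', add_zero,
          ↓reduceIte]
        omega
      rcases eq_or_ne k j with rfl | hkj
      · simp [hji.ne]
      · simp [hki, hkj]
  simpa using key t le_rfl

lemma MinGen.truncW_notMem {W : Fin n → ℕ} {μ : ℕ} (hW : MinGen I W)
    (hmax : maxVar W = μ) (hμ : 0 < μ) : truncW W (μ - 1) ∉ I := by
  intro hT
  obtain ⟨i, hi, hWi⟩ := exists_pos_of_maxVar_eq hmax hμ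
  have hTW := hW.2 _ hT fun k => by unfold truncW; split_ifs <;> omega
  have hTi : truncW W (μ - 1) i = 0 := if_neg (by omega)
  rw [hTW] at hTi
  omega

namespace MonIdeal

lemma Iset_finite (hI : MonIdeal I) {m t : ℕ} (ht : 0 < t)
    (hpow : ∀ k : Fin n, k.1 < m → Pi.single k t ∈ I) : (Iset I m).Finite := by
  refine (Set.Finite.pi' fun _ => Set.finite_Iio t).subset fun β hβ k => ?_
  by_cases hk : m ≤ k.1
  · rw [Set.mem_Iio, hβ.1 k hk]
    exact ht
  · by_contra! hle
    refine hβ.2 (hI _ (hpow k (by omega)) β fun l => ?_)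
    rcases eq_or_ne l k with rfl | hlk
    · simpa using hle
    · simp [hlk]

lemma lt_fmin_iff (hI : MonIdeal I) {α : Fin n → ℕ} {i : Fin n}
    (hne : ∃ t, α + Pi.single i t ∈ I) {b : ℕ} :
    b < fmin I α i ↔ α + Pi.single i b ∉ I := by
  refine ⟨fun hb hmem => (Nat.sInf_le hmem).not_gt hb, fun hb => ?_⟩
  by_contra! hle
  have hmem : α + Pi.single i (fmin I α i) ∈ I := Nat.sInf_mem hne
  refine hb (hI _ hmem _ fun k => ?_)
  rcases eq_or_ne k i with rfl | hki
  · simpa using hle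
  · simp [hki]

/-- The monomials outside `I` in the first `e + 1` variables are the `x^α x_{e+1}^b` with `α`
outside `I` in the first `e` variables and `b < f_{e+1}(α)`. -/
lemma ncard_Iset_succ (hI : MonIdeal I) (e : Fin n) (hfin : (Iset I e).Finite)
    (hne : ∀ α ∈ Iset I e, ∃ t, α + Pi.single e t ∈ I) :
    (Iset I (e.1 + 1)).ncard = ∑ᶠ α ∈ Iset I e, fmin I α e := by
  have hαe : ∀ α ∈ Iset I e, α e = 0 := fun α hα => hα.1 e le_rfl
  have hsum : ∑ᶠ α ∈ Iset I e, fmin I α e =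
      (hfin.toFinset.sigma fun α => Finset.range (fmin I α e)).card := by
    simp [finsum_mem_eq_finite_toFinset_sum _ hfin, Finset.card_sigma]
  rw [hsum, ← Set.ncard_coe_finset]
  symm
  refine Set.ncard_congr (fun p _ => p.1 + Pi.single e p.2) ?_ ?_ ?_
  · rintro ⟨α, b⟩ hp
    simp only [Finset.coe_sigma, Set.mem_sigma_iff, Set.Finite.coe_toFinset, Finset.coe_range,
      Set.mem_Iio] at hp
    refine ⟨fun k hk => ?_, (hI.lt_fmin_iff (hne α hp.1)).mp hp.2⟩
    have hke : k ≠ e := fun h => by rw [h] at hk; omega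
    simpa [hke] using hp.1.1 k (by omega)
  · rintro ⟨α, b⟩ ⟨α', b'⟩ hp hp' h
    simp only [Finset.coe_sigma, Set.mem_sigma_iff, Set.Finite.coe_toFinset] at hp hp'
    have hb : b = b' := by simpa [hαe α hp.1, hαe α' hp'.1] using congrFun h e
    subst hb
    obtain rfl := add_right_cancel h
    rfl
  · intro β hβ
    have hα : update β e 0 ∈ Iset I e := by
      refine ⟨fun k hk => ?_, fun h => hβ.2 (hI _ h β fun k => ?_)⟩
      · rcases eq_or_ne k e with rfl | hke
        · simp
        · rw [update_of_ne hke]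
          exact hβ.1 k (by have := Fin.val_ne_of_ne hke; omega)
      · rcases eq_or_ne k e with rfl | hke
        · simp
        · rw [update_of_ne hke]
    refine ⟨⟨update β e 0, β e⟩, ?_, update_zero_add_single β e⟩
    simp only [Finset.coe_sigma, Set.mem_sigma_iff, Set.Finite.coe_toFinset, Finset.coe_range,
      Set.mem_Iio]
    refine ⟨hα, (hI.lt_fmin_iff (hne _ hα)).mpr ?_⟩
    rw [update_zero_add_single]
    exact hβ.2

end MonIdeal

lemma IsetLast_eq_Iset_iff {W : Fin n → ℕ} {μ : ℕ} (hI : MonIdeal I) (hW : MinGen I W)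
    (hmax : maxVar W = μ) :
    IsetLast I W μ = Iset I (μ - 1) ↔ ∀ j : Fin n, j.1 < μ - 1 → W j = 0 := by
  constructor
  · intro heq
    by_contra! ⟨j, hj, hWj⟩
    set T := truncW W (μ - 1)
    have hTj : T j = W j := if_pos hj
    have hT : T - Pi.single j 1 + Pi.single j 1 = T := by
      funext k
      rcases eq_or_ne k j with rfl | hkj
      · simp only [Pi.add_apply, Pi.sub_apply, Pi.single_eq_same]
        omega
      · simp [hkj]
    have hβ : T - Pi.single j 1 ∈ Iset I (μ - 1) := by
      refine ⟨fun k hk => ?_, fun h => hW.truncW_notMem hmax (by omega) ?_⟩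
      · have hTk : T k = 0 := if_neg (by omega)
        simp [hTk]
      · exact hI _ h _ fun k => Nat.sub_le _ _
    have hdeg : mdeg (T - Pi.single j 1) < mdeg T := by
      have := congrArg mdeg hT
      rw [mdeg_add, mdeg_single] at this
      omega
    rw [← heq] at hβ
    rcases hβ.2 with h | h
    · exact hdeg.ne (congrArg mdeg h)
    · exact not_revLexGT_of_mdeg_lt hdeg h
  · intro h0
    have hT0 : truncW W (μ - 1) = 0 := funext fun k => by
      unfold truncW
      split_ifs with hk
      exacts [h0 k hk, rfl]
    refine Set.Subset.antisymm (fun β hβ => hβ.1) fun β hβ => ⟨hβ, ?_⟩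
    rw [hT0]
    exact (eq_or_ne β 0).imp_right revLexGT_zero_of_ne_zero

end

/-- `|𝓘_{μ-1}| ≤ Σ_{α ∈ 𝓘_{μ-2}} f_{μ-1}(α)`, with equality iff
`M_ω = x_μ^{ω_μ}`; in particular `𝓘_{μ-1}` is finite. -/
theorem card_last_Iset_le_sum {n μ : ℕ} (I : Set (Fin n → ℕ))
    (hI : StronglyStable I)
    (W : Fin n → ℕ) (hW : IsLastGen I W) (hmax : maxVar W = μ)
    (hμ : 2 ≤ μ) (hμn : μ ≤ n)
    (hpow : ∃ t, 0 < t ∧ Pi.single (⟨μ - 2, by omega⟩ : Fin n) t ∈ I) :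
    (IsetLast I W μ).Finite ∧
    (IsetLast I W μ).ncard ≤ ∑ᶠ α ∈ Iset I (μ - 2), fmin I α ⟨μ - 2, by omega⟩ ∧
    ((IsetLast I W μ).ncard = ∑ᶠ α ∈ Iset I (μ - 2), fmin I α ⟨μ - 2, by omega⟩ ↔
      ∀ j : Fin n, j.1 < μ - 1 → W j = 0) := by
  obtain ⟨t, ht, hpt⟩ := hpow
  set e : Fin n := ⟨μ - 2, by omega⟩
  have hpowers : ∀ k : Fin n, k.1 < μ - 1 → Pi.single k t ∈ I := fun k hk =>
    (eq_or_lt_of_le (show k ≤ e from Fin.le_def.mpr (show k.1 ≤ μ - 2 by omega))).elim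
      (fun h => h ▸ hpt) (hI.single_mem_of_lt · hpt)
  have hfin : (Iset I (μ - 1)).Finite := hI.1.Iset_finite ht hpowers
  have hcard : (Iset I (μ - 1)).ncard = ∑ᶠ α ∈ Iset I (μ - 2), fmin I α e := by
    have hsucc : e.1 + 1 = μ - 1 := show μ - 2 + 1 = μ - 1 by omega
    rw [← hsucc]
    exact hI.1.ncard_Iset_succ e (hfin.subset (Iset_mono (by omega)))
      fun α _ => ⟨t, hI.1 _ hpt _ fun k => Nat.le_add_left _ _⟩
  have hsub : IsetLast I W μ ⊆ Iset I (μ - 1) := fun _ h => h.1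
  rw [← hcard, ← IsetLast_eq_Iset_iff hI.1 hW.1 hmax]
  exact ⟨hfin.subset hsub, Set.ncard_le_ncard hsub hfin,
    fun h => Set.eq_of_subset_of_ncard_le hsub h.ge hfin, fun h => h ▸ rfl⟩
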